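/- In the Minsky-machine increment gadget, if v₁ ≥ v₂ and v₁ < p (all natural numbers, p ≥ 1), then the sequence of delays 1, p−v₁−1, v₁−v₂, 1, v₂, with clock x₁ reset after the second delay, clock x₂ reset after the third and fourth delays, and clock z reset at the start and after the last delay, transforms the clock valuation (x₁ ↦ v₁, x₂ ↦ v₂, z ↦ 0) into (x₁ ↦ v₁+1, x₂ ↦ v₂, z ↦ 0), and all intermediate guard checks hold: after delay 1, z = 1; then x₁ = p; then x₂ = p; then x₂ = 1; then z = p. -/
import Mathlib


inductive Clk | x1 | x2 | z
deriving DecidableEq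

/-- Delaying a clock valuation by `d`. -/
def delay (ν : Clk → ℝ) (d : ℝ) : Clk → ℝ := fun c => ν c + d

/-- Resetting a single clock to `0`. -/
def reset (ν : Clk → ℝ) (c0 : Clk) : Clk → ℝ := fun c => if c = c0 then 0 else ν c

/-- Increment gadget, upper branch (`v₂ ≤ v₁ < p`): the delay sequence
`1, p−v₁−1, v₁−v₂, 1, v₂` with the prescribed resets passes all guards and
transforms `(v₁, v₂, 0)` into `(v₁+1, v₂, 0)`. -/
theorem increment_gadget_upper (v1 v2 p : ℕ) (h12 : v2 ≤ v1) (h1p : v1 < p)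
    (ν0 : Clk → ℝ) (hx1 : ν0 .x1 = v1) (hx2 : ν0 .x2 = v2) (hz : ν0 .z = 0) :
    let a1 := delay ν0 1
    let b1 := reset a1 .z
    let a2 := delay b1 ((p : ℝ) - v1 - 1)
    let b2 := reset a2 .x1
    let a3 := delay b2 ((v1 : ℝ) - v2)
    let b3 := reset a3 .x2
    let a4 := delay b3 1
    let b4 := reset a4 .x2
    let a5 := delay b4 (v2 : ℝ)
    let bf := reset a5 .z
    a1 .z = 1 ∧ a2 .x1 = p ∧ a3 .x2 = p ∧ a4 .x2 = 1 ∧ a5 .z = p ∧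
    bf .x1 = (v1 : ℝ) + 1 ∧ bf .x2 = v2 ∧ bf .z = 0 := by
  simp only [delay, reset, hx1, hx2, hz]
  norm_num
  push_cast
  refine ⟨by ring, ?_⟩
  and_intros
  all_goals (intros; first | ring1 | exact (‹False›).elim)
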